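/- Let R be a dense rooted-triplet instance over V, G ⊆ V a set of leaves such that R[G ∪ S] is consistent for every subset S of V \ G of size at most 2, with each leaf of V \ G having a fixed locus edge e in the tree consistent with R[G]. For a tree edge e, define on B_e (the leaves with locus e) the relation a <_e b iff there exists c ∈ G with ac|b ∈ R, and a ∼_e b iff neither a <_e b nor b <_e a. Then if additionally for every 4-subset with a unique new seed leaf no conflict exists (maximality of the conflict packing), <_e is a strict weak ordering: <_e is asymmetric and transitive, and ∼_e is transitive. -/

import Mathlib

/-- Rooted binary trees with leaves labelled by `V`. -/
inductive RTree (V : Type*) : Type _ where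
  | leaf : V → RTree V
  | node : RTree V → RTree V → RTree V

namespace RTree

variable {V : Type*} [DecidableEq V]

/-- The list of leaf labels of a tree, from left to right. -/
def leafList : RTree V → List V
  | .leaf x => [x]
  | .node l r => l.leafList ++ r.leafList

/-- The set of leaf labels of a tree. -/
def leaves (t : RTree V) : Finset V := t.leafList.toFinset

/-- A tree is proper when all its leaf labels are distinct. -/
def Proper (t : RTree V) : Prop := t.leafList.Nodup

/-- `Consistent T a b c` means that the rooted triplet `ab|c` is consistent
with `T`, i.e. the restriction of `T` to `{a, b, c}` is homeomorphic to the
rooted binary tree in which `a` and `b` are siblings below one child of the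
root, the other child being `c`. -/
def Consistent : RTree V → V → V → V → Prop
  | .leaf _, _, _, _ => False
  | .node l r, a, b, c =>
      (a ∈ l.leaves ∧ b ∈ l.leaves ∧ c ∈ l.leaves ∧ Consistent l a b c) ∨
      (a ∈ r.leaves ∧ b ∈ r.leaves ∧ c ∈ r.leaves ∧ Consistent r a b c) ∨
      (a ∈ l.leaves ∧ b ∈ l.leaves ∧ c ∈ r.leaves) ∨
      (a ∈ r.leaves ∧ b ∈ r.leaves ∧ c ∈ l.leaves)

end RTree

variable {V : Type*} [DecidableEq V]

/-- A dense rooted-triplet instance is encoded by a map `R` assigning to each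
`3`-subset `{a, b, c}` its chosen apex: `R {a, b, c} = c` means that the
triplet `ab|c` belongs to the instance. Validity requires the apex to belong
to the `3`-set. -/
def TripletValid (R : Finset V → V) (S : Finset V) : Prop :=
  ∀ a b c : V, a ∈ S → b ∈ S → c ∈ S → a ≠ b → a ≠ c → b ≠ c →
    R {a, b, c} ∈ ({a, b, c} : Finset V)

/-- `Realizes T R S`: every rooted triplet of the instance `R` on leaves of
`S` is consistent with the tree `T`. -/
def Realizes (T : RTree V) (R : Finset V → V) (S : Finset V) : Prop :=
  ∀ a b c : V, a ∈ S → b ∈ S → c ∈ S → a ≠ b → a ≠ c → b ≠ c →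
    R {a, b, c} = c → T.Consistent a b c

/-- The instance `R` restricted to `S` is consistent: some rooted binary tree
over `S` realizes all its triplets. -/
def TripletConsistentOn (R : Finset V → V) (S : Finset V) : Prop :=
  ∃ T : RTree V, T.Proper ∧ T.leaves = S ∧ Realizes T R S

/-- A leaf `x` of a conflict `C = {x, b, c, d}` is a seed if `C` remains a
conflict for every possible choice of the triplet on `C \ {x}`. -/
def RTISeed (R : Finset V → V) (x : V) (C : Finset V) : Prop :=
  x ∈ C ∧ ∀ y ∈ C.erase x,
    ¬ TripletConsistentOn (Function.update R (C.erase x) y) C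

/-- The relation `a <_e b` on the leaves with locus `e`: there exists
`c ∈ G` with `ac|b ∈ R`. -/
def LtE (R : Finset V → V) (G : Finset V) (a b : V) : Prop :=
  ∃ c ∈ G, R {a, c, b} = b

/-!
In a tree, the triplets through a fixed leaf `x` are governed by a rank: `ax|b` holds iff the
lowest common ancestor of `b` and `x` lies strictly above that of `a` and `x`. Hence, whenever
the triplets of `R` through `d` on `{a, b, c, d}` are realizable — and they are, for otherwise
`d` would be a seed of a conflict, contradicting maximality of the packing — the relation
`a <_d b` (that is, `ad|b ∈ R`) is a strict weak order on `{a, b, c}`.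

The witnesses of `<_e` can moreover be exchanged: `a <_d b` and `b <_e c` give `b <_d c`.
Comparing ranks around `d` in the tree of `R[G ∪ {a, b}]`, where `a` and `b` have the same
triplets with `d, e ∈ G`, excludes `be|d`; comparing ranks around `b` in the tree of
`R[G ∪ {b, c}]` then turns `be|c` into `bd|c`. With a common witness, all three properties of a
strict weak order reduce to the rank around that witness.
-/

namespace RTree

/-- Depth of the lowest common ancestor of `x` and `y`; junk value `0` unless both are
leaves. -/
def lcaDepth : RTree V → V → V → ℕ
  | .leaf _, _, _ => 0
  | .node l r, x, y =>
      if x ∈ l.leaves ∧ y ∈ l.leaves then l.lcaDepth x y + 1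
      else if x ∈ r.leaves ∧ y ∈ r.leaves then r.lcaDepth x y + 1
      else 0

variable {l r t : RTree V} {a b x : V}

theorem mem_leaves_node : x ∈ (node l r).leaves ↔ x ∈ l.leaves ∨ x ∈ r.leaves := by
  simp [leaves, leafList]

theorem proper_node : (node l r).Proper ↔ l.Proper ∧ r.Proper ∧ Disjoint l.leaves r.leaves := by
  simp only [Proper, leafList, leaves, List.nodup_append', List.disjoint_toFinset_iff_disjoint]

theorem consistent_iff_lcaDepth_lt (ht : t.Proper) (hb : b ∈ t.leaves) :
    t.Consistent a x b ↔ t.lcaDepth b x < t.lcaDepth a x := by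
  induction t with
  | leaf => simp [Consistent, lcaDepth]
  | node l r ihl ihr =>
    obtain ⟨hl, hr, hlr⟩ := proper_node.1 ht
    have := Finset.disjoint_left.1 hlr
    have := Finset.disjoint_right.1 hlr
    rcases mem_leaves_node.1 hb with hb | hb
    · have := ihl hl hb
      by_cases ha : a ∈ l.leaves <;> by_cases hx : x ∈ l.leaves <;>
        simp_all [Consistent, lcaDepth]
      split_ifs <;> simp_all
    · have := ihr hr hb
      by_cases ha : a ∈ r.leaves <;> by_cases hx : x ∈ r.leaves <;>
        simp_all [Consistent, lcaDepth]
      split_ifs <;> simp_all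

theorem Consistent.lcaDepth_eq (ht : t.Proper) (h : t.Consistent a b x) :
    t.lcaDepth a x = t.lcaDepth b x := by
  induction t with
  | leaf => simp [Consistent] at h
  | node l r ihl ihr =>
    obtain ⟨hl, hr, hlr⟩ := proper_node.1 ht
    have := Finset.disjoint_left.1 hlr
    have := Finset.disjoint_right.1 hlr
    rcases h with ⟨ha, hb, hx, h⟩ | ⟨ha, hb, hx, h⟩ | ⟨ha, hb, hx⟩ | ⟨ha, hb, hx⟩ <;>
      simp_all [lcaDepth]

end RTree

section Triplets

variable {R : Finset V → V} {C G S : Finset V} {T : RTree V} {k : V → ℕ} {a b c d e x y : V}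

theorem TripletValid.mono (hval : TripletValid R S) (hCS : C ⊆ S) : TripletValid R C :=
  fun a b c ha hb hc => hval a b c (hCS ha) (hCS hb) (hCS hc)

theorem TripletValid.update_erase (hval : TripletValid R C) (hy : y ∈ C.erase x) :
    TripletValid (Function.update R (C.erase x) y) C := by
  intro a b c ha hb hc hab hac hbc
  by_cases h : ({a, b, c} : Finset V) = C.erase x
  · rwa [h, Function.update_self]
  · rw [Function.update_of_ne h]
    exact hval a b c ha hb hc hab hac hbc

theorem Realizes.consistent_iff (hTR : Realizes T R S) (hT : T.Proper) (hS : S ⊆ T.leaves)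
    (hval : TripletValid R S) (ha : a ∈ S) (hb : b ∈ S) (hc : c ∈ S)
    (hab : a ≠ b) (hac : a ≠ c) (hbc : b ≠ c) :
    T.Consistent a b c ↔ R {a, b, c} = c := by
  refine ⟨fun h => ?_, hTR a b c ha hb hc hab hac hbc⟩
  -- `T` displays at most one triplet on `{a, b, c}`, so `R` cannot pick another apex.
  have hdepth := h.lcaDepth_eq hT
  have hapex := hval a b c ha hb hc hab hac hbc
  simp only [Finset.mem_insert, Finset.mem_singleton] at hapex
  rcases hapex with hapex | hapex | hapex
  · have h' := hTR b c a hb hc ha hbc hab.symm hac.symm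
      (by rwa [Finset.pair_comm, Finset.insert_comm])
    rw [RTree.consistent_iff_lcaDepth_lt hT (hS ha)] at h'
    omega
  · have h' := hTR a c b ha hc hb hac hab hbc.symm (by rwa [Finset.pair_comm])
    rw [RTree.consistent_iff_lcaDepth_lt hT (hS hb)] at h'
    omega
  · exact hapex

/-- `a <_x b`: the triplet `ax|b` belongs to `R`. -/
def LtAt (R : Finset V → V) (x a b : V) : Prop := R {a, x, b} = b

/-- `k` represents `<_x` on `C`. A tree realizing `R` on `C` provides one: the depth of the
lowest common ancestor with `x`. -/
def IsRankAround (R : Finset V → V) (C : Finset V) (x : V) (k : V → ℕ) : Prop :=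
  ∀ a ∈ C, ∀ b ∈ C, a ≠ b → a ≠ x → b ≠ x → (LtAt R x a b ↔ k b < k a)

theorem ltAt_comm : LtAt R x a b ↔ LtAt R a x b := by
  rw [LtAt, LtAt, Finset.insert_comm]

theorem LtAt.eq_of_ltAt (h : LtAt R x a b) (h' : LtAt R x b a) : a = b := by
  rw [LtAt, Finset.insert_comm, Finset.pair_comm, Finset.insert_comm] at h'
  exact h'.symm.trans h

theorem IsRankAround.apex_eq_iff (hk : IsRankAround R C x k) (hval : TripletValid R C)
    (ha : a ∈ C) (hb : b ∈ C) (hx : x ∈ C) (hab : a ≠ b) (hax : a ≠ x) (hbx : b ≠ x) :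
    R {a, b, x} = x ↔ k a = k b := by
  have hlt := hk a ha b hb hab hax hbx
  have hgt := hk b hb a ha hab.symm hbx hax
  rw [LtAt, Finset.pair_comm] at hlt
  rw [LtAt, Finset.pair_comm, Finset.insert_comm] at hgt
  have hapex := hval a b x ha hb hx hab hax hbx
  simp only [Finset.mem_insert, Finset.mem_singleton] at hapex
  constructor
  · intro h
    rw [h] at hlt hgt
    have := hlt.not.1 hbx.symm
    have := hgt.not.1 hax.symm
    omega
  · intro h
    rcases hapex with hapex | hapex | hapex
    · exact absurd (hgt.1 hapex) (by omega)
    · exact absurd (hlt.1 hapex) (by omega)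
    · exact hapex

theorem TripletConsistentOn.exists_rank (hC : TripletConsistentOn R C) (hval : TripletValid R C)
    (hx : x ∈ C) : ∃ k, IsRankAround R C x k := by
  obtain ⟨T, hT, hl, hTR⟩ := hC
  refine ⟨fun y => T.lcaDepth y x, fun a ha b hb hab hax hbx => ?_⟩
  rw [← RTree.consistent_iff_lcaDepth_lt hT (hl ▸ hb)]
  exact (hTR.consistent_iff hT hl.ge hval ha hx hb hax hab hbx.symm).symm

theorem exists_rank_of_not_seed_conflict (hval : TripletValid R C) (hx : x ∈ C)
    (hC : ¬ (RTISeed R x C ∧ ¬ TripletConsistentOn R C)) : ∃ k, IsRankAround R C x k := by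
  by_contra hk
  refine hC ⟨⟨hx, fun y hy hC' => hk ?_⟩, fun hC' => hk (hC'.exists_rank hval hx)⟩
  obtain ⟨k, hk'⟩ := hC'.exists_rank (hval.update_erase hy) hx
  refine ⟨k, fun a ha b hb hab hax hbx => ?_⟩
  have hne : ({a, x, b} : Finset V) ≠ C.erase x := fun h =>
    Finset.notMem_erase x C (h ▸ by simp)
  rw [← hk' a ha b hb hab hax hbx, LtAt, LtAt, Function.update_of_ne hne]

def SameLocus (R : Finset V → V) (G : Finset V) (a b : V) : Prop :=
  ∀ c ∈ G, ∀ d ∈ G, c ≠ d → (LtAt R c a d ↔ LtAt R c b d)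

theorem tripletConsistentOn_union_pair [Fintype V]
    (hcons : ∀ S : Finset V, S ⊆ Finset.univ \ G → S.card ≤ 2 → TripletConsistentOn R (G ∪ S))
    (ha : a ∉ G) (hb : b ∉ G) : TripletConsistentOn R (G ∪ {a, b}) :=
  hcons {a, b} (by simp [Finset.insert_subset_iff, ha, hb]) Finset.card_le_two

theorem not_ltAt_of_sameLocus (hval : TripletValid R (G ∪ {a, b}))
    (hcons : TripletConsistentOn R (G ∪ {a, b})) (ha : a ∉ G) (hb : b ∉ G) (hab : a ≠ b)
    (hsame : SameLocus R G a b) (hd : d ∈ G) (he : e ∈ G) (hed : e ≠ d)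
    (h : LtAt R d a b) : ¬ LtAt R e b d := by
  obtain ⟨k, hk⟩ := hcons.exists_rank (x := d) hval (by simp [hd])
  intro hbed
  have had := (ne_of_mem_of_not_mem hd ha).symm
  have hbd := (ne_of_mem_of_not_mem hd hb).symm
  have hba := (hk a (by simp) b (by simp) hab had hbd).1 h
  have hae := (hk.apex_eq_iff hval (by simp) (by simp [he]) (by simp [hd])
    (ne_of_mem_of_not_mem he ha).symm had hed).1 ((hsame e he d hd hed).2 hbed)
  have hbe := (hk.apex_eq_iff hval (by simp) (by simp [he]) (by simp [hd])
    (ne_of_mem_of_not_mem he hb).symm hbd hed).1 hbed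
  omega

theorem ltAt_of_not_ltAt (hval : TripletValid R (G ∪ {b, c}))
    (hcons : TripletConsistentOn R (G ∪ {b, c})) (hb : b ∉ G) (hc : c ∉ G) (hbc : b ≠ c)
    (hd : d ∈ G) (he : e ∈ G) (hed : e ≠ d) (hbed : ¬ LtAt R e b d) (h : LtAt R e b c) :
    LtAt R d b c := by
  obtain ⟨k, hk⟩ := hcons.exists_rank (x := b) hval (by simp)
  have hbd := ne_of_mem_of_not_mem hd hb
  have hbe := ne_of_mem_of_not_mem he hb
  have hce := ne_of_mem_of_not_mem he hc
  rw [ltAt_comm] at h hbed ⊢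
  have hec := (hk e (by simp [he]) c (by simp) hce hbe hbc.symm).1 h
  have hde := (hk e (by simp [he]) d (by simp [hd]) hed hbe hbd).not.1 hbed
  exact (hk d (by simp [hd]) c (by simp) (ne_of_mem_of_not_mem hd hc) hbd hbc.symm).2 (by omega)

theorem ltAt_of_ltAt_of_sameLocus [Fintype V] (hval : TripletValid R Finset.univ)
    (hcons : ∀ S : Finset V, S ⊆ Finset.univ \ G → S.card ≤ 2 → TripletConsistentOn R (G ∪ S))
    (ha : a ∉ G) (hb : b ∉ G) (hc : c ∉ G) (hab : a ≠ b) (hbc : b ≠ c)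
    (hsame : SameLocus R G a b) (hd : d ∈ G) (he : e ∈ G)
    (h₁ : LtAt R d a b) (h₂ : LtAt R e b c) : LtAt R d b c := by
  obtain rfl | hed := eq_or_ne e d
  · exact h₂
  have hbed := not_ltAt_of_sameLocus (hval.mono (Finset.subset_univ _))
    (tripletConsistentOn_union_pair hcons ha hb) ha hb hab hsame hd he hed h₁
  exact ltAt_of_not_ltAt (hval.mono (Finset.subset_univ _))
    (tripletConsistentOn_union_pair hcons hb hc) hb hc hbc hd he hed hbed h₂

theorem LtAt.trans_of_not_seed_conflict (hval : TripletValid R {a, b, c, d})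
    (hab : a ≠ b) (hac : a ≠ c) (hbc : b ≠ c) (had : a ≠ d) (hbd : b ≠ d) (hcd : c ≠ d)
    (hC : ¬ (RTISeed R d {a, b, c, d} ∧ ¬ TripletConsistentOn R {a, b, c, d}))
    (h₁ : LtAt R d a b) (h₂ : LtAt R d b c) :
    LtAt R d a c := by
  obtain ⟨k, hk⟩ := exists_rank_of_not_seed_conflict hval (by simp) hC
  have hba := (hk a (by simp) b (by simp) hab had hbd).1 h₁
  have hcb := (hk b (by simp) c (by simp) hbc hbd hcd).1 h₂
  exact (hk a (by simp) c (by simp) hac had hcd).2 (by omega)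

theorem not_ltAt_of_not_seed_conflict (hval : TripletValid R {a, b, c, d})
    (hab : a ≠ b) (hac : a ≠ c) (hbc : b ≠ c) (had : a ≠ d) (hbd : b ≠ d) (hcd : c ≠ d)
    (hC : ¬ (RTISeed R d {a, b, c, d} ∧ ¬ TripletConsistentOn R {a, b, c, d}))
    (h₁ : ¬ LtAt R d a b) (h₁' : ¬ LtAt R d b a)
    (h₂ : ¬ LtAt R d b c) (h₂' : ¬ LtAt R d c b) : ¬ LtAt R d a c ∧ ¬ LtAt R d c a := by
  obtain ⟨k, hk⟩ := exists_rank_of_not_seed_conflict hval (by simp) hC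
  have := (hk a (by simp) b (by simp) hab had hbd).not.1 h₁
  have := (hk b (by simp) a (by simp) hab.symm hbd had).not.1 h₁'
  have := (hk b (by simp) c (by simp) hbc hbd hcd).not.1 h₂
  have := (hk c (by simp) b (by simp) hbc.symm hcd hbd).not.1 h₂'
  rw [hk a (by simp) c (by simp) hac had hcd, hk c (by simp) a (by simp) hac.symm hcd had]
  omega

end Triplets

/-- Let `R` be a dense rooted-triplet instance over `V` and `G ⊆ V` such that
`R[G ∪ S]` is consistent for every `S ⊆ V \ G` with `|S| ≤ 2`. Let `B` be a
set of leaves of `V \ G` all having the same locus edge `e` in the tree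
realizing `R[G]` (having the same locus is expressed by inducing the same
triplets relative to pairs of leaves of `G`). If moreover, by maximality of
the conflict packing, no 4-subset consisting of three leaves of `B` and one
leaf `d ∈ G` which is a seed of it forms a conflict, then `<_e` is a strict
weak ordering on `B`: `<_e` is asymmetric and transitive, and the
incomparability relation `∼_e` is transitive. -/
theorem ltE_strict_weak_order [Fintype V]
    (R : Finset V → V) (hval : TripletValid R Finset.univ)
    (G : Finset V)
    (hcons : ∀ S : Finset V, S ⊆ Finset.univ \ G → S.card ≤ 2 →
      TripletConsistentOn R (G ∪ S))
    (B : Finset V) (hBG : B ⊆ Finset.univ \ G)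
    (hsame : ∀ a ∈ B, ∀ b ∈ B, ∀ c ∈ G, ∀ d ∈ G, c ≠ d →
      ((R {a, c, d} = c ↔ R {b, c, d} = c) ∧ (R {a, c, d} = d ↔ R {b, c, d} = d)))
    (hmax : ∀ d ∈ G, ∀ a ∈ B, ∀ b ∈ B, ∀ c ∈ B, a ≠ b → a ≠ c → b ≠ c →
      ¬ (RTISeed R d {a, b, c, d} ∧ ¬ TripletConsistentOn R {a, b, c, d})) :
    (∀ a ∈ B, ∀ b ∈ B, a ≠ b → ¬ (LtE R G a b ∧ LtE R G b a)) ∧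
    (∀ a ∈ B, ∀ b ∈ B, ∀ c ∈ B, a ≠ b → a ≠ c → b ≠ c →
      LtE R G a b → LtE R G b c → LtE R G a c) ∧
    (∀ a ∈ B, ∀ b ∈ B, ∀ c ∈ B, a ≠ b → a ≠ c → b ≠ c →
      (¬ LtE R G a b ∧ ¬ LtE R G b a) → (¬ LtE R G b c ∧ ¬ LtE R G c b) →
      (¬ LtE R G a c ∧ ¬ LtE R G c a)) := by
  have hB : ∀ x ∈ B, x ∉ G := fun x hx => (Finset.mem_sdiff.1 (hBG hx)).2
  have hne : ∀ x ∈ B, ∀ d ∈ G, x ≠ d := fun x hx d hd =>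
    (ne_of_mem_of_not_mem hd (hB x hx)).symm
  have exchange : ∀ {a b c d e}, a ∈ B → b ∈ B → c ∈ B → a ≠ b → b ≠ c → d ∈ G → e ∈ G →
      LtAt R d a b → LtAt R e b c → LtAt R d b c := fun ha hb hc hab hbc hd he =>
    ltAt_of_ltAt_of_sameLocus hval hcons (hB _ ha) (hB _ hb) (hB _ hc) hab hbc
      (fun x hx y hy hxy => (hsame _ ha _ hb x hx y hy hxy).2) hd he
  refine ⟨?_, ?_, ?_⟩
  · rintro a ha b hb hab ⟨⟨d, hd, h₁⟩, ⟨e, he, h₂⟩⟩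
    exact hab (LtAt.eq_of_ltAt h₁ (exchange ha hb ha hab hab.symm hd he h₁ h₂))
  · rintro a ha b hb c hc hab hac hbc ⟨d, hd, h₁⟩ ⟨e, he, h₂⟩
    exact ⟨d, hd, LtAt.trans_of_not_seed_conflict (hval.mono (Finset.subset_univ _))
      hab hac hbc (hne a ha d hd) (hne b hb d hd) (hne c hc d hd)
      (hmax d hd a ha b hb c hc hab hac hbc) h₁ (exchange ha hb hc hab hbc hd he h₁ h₂)⟩
  · rintro a ha b hb c hc hab hac hbc ⟨hab', hba'⟩ ⟨hbc', hcb'⟩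
    have incomparable := fun d (hd : d ∈ G) => not_ltAt_of_not_seed_conflict
      (hval.mono (Finset.subset_univ _)) hab hac hbc (hne a ha d hd) (hne b hb d hd)
      (hne c hc d hd) (hmax d hd a ha b hb c hc hab hac hbc)
      (fun h => hab' ⟨d, hd, h⟩) (fun h => hba' ⟨d, hd, h⟩)
      (fun h => hbc' ⟨d, hd, h⟩) (fun h => hcb' ⟨d, hd, h⟩)
    exact ⟨fun ⟨d, hd, h⟩ => (incomparable d hd).1 h, fun ⟨d, hd, h⟩ => (incomparable d hd).2 h⟩
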